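/- arXiv:1907.07351 — 5 statements merged into one kernel-verified Lean document; each statement's English description precedes it below -/
import Mathlib

section
/- Let 0 < θ < π/2 and let γ : [0,1] → ℂ be a continuous map with γ(0) = p for some real p ≥ 0 and γ(1) = q·e^{iθ} for some real q ≥ 0 (i.e., the endpoints of γ lie on the two bounding rays of the sector). If there exists t ∈ [0,1] with |γ(t)| > 1, then the total variation of γ on [0,1] is strictly greater than sin θ. -/
/-!
Let `z` be a point of the arc with `‖z‖ > 1` and `u = e^{iθ}`. The cross product
`Im (z * conj (z * conj u)) = ‖z‖² sin θ`, bounded term by term, gives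
`‖z‖ sin θ ≤ |Im z| + |Im (z * conj u)|`, the sum of the distances from `z` to the two lines
bounding the sector. These are at most the distances from `z` to the two endpoints of the arc,
whose sum is at most its length, and `‖z‖ sin θ > sin θ`.
-/

open Complex ComplexConjugate

namespace Complex

theorem abs_im_mul_conj_le (z w : ℂ) :
    |(z * conj w).im| ≤ ‖w‖ * |z.im| + ‖z‖ * |w.im| := by
  have hre : |w.re| ≤ ‖w‖ := abs_re_le_norm w
  have hre' : |z.re| ≤ ‖z‖ := abs_re_le_norm z
  calc |(z * conj w).im| = |z.im * w.re - z.re * w.im| := by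
        rw [mul_im, conj_re, conj_im]; ring_nf
    _ ≤ |z.im| * |w.re| + |z.re| * |w.im| := by
        rw [← abs_mul, ← abs_mul]; exact abs_sub _ _
    _ ≤ ‖w‖ * |z.im| + ‖z‖ * |w.im| := by
        rw [mul_comm ‖w‖]; gcongr

theorem norm_mul_im_le_abs_im_add_abs_im_mul_conj {u : ℂ} (hu : ‖u‖ = 1) (z : ℂ) :
    ‖z‖ * u.im ≤ |z.im| + |(z * conj u).im| := by
  have hcross : (z * conj (z * conj u)).im = ‖z‖ ^ 2 * u.im := by
    rw [map_mul, conj_conj, ← mul_assoc, mul_conj, normSq_eq_norm_sq, im_ofReal_mul]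
  have hbound := abs_im_mul_conj_le z (z * conj u)
  rw [hcross, norm_mul, norm_conj, hu, mul_one] at hbound
  rcases (norm_nonneg z).eq_or_lt with hz | hz
  · rw [← hz, zero_mul]; positivity
  · nlinarith [le_abs_self (‖z‖ ^ 2 * u.im)]

theorem abs_im_le_dist_ofReal (z : ℂ) (x : ℝ) : |z.im| ≤ dist z x := by
  simpa [dist_eq] using abs_im_le_norm (z - x)

theorem abs_im_mul_conj_le_dist {u : ℂ} (hu : ‖u‖ = 1) (z : ℂ) (x : ℝ) :
    |(z * conj u).im| ≤ dist z (x * u) := by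
  have hdist : dist z (x * u) = dist (z * conj u) x := by
    have hunit : u * conj u = 1 := by
      rw [mul_conj, normSq_eq_norm_sq, hu]; norm_num
    rw [dist_eq, dist_eq, ← mul_one ‖z - x * u‖, ← hu, ← norm_conj u, ← norm_mul, sub_mul,
      mul_assoc, hunit, mul_one]
  rw [hdist]
  exact abs_im_le_dist_ofReal _ x

end Complex

theorem edist_add_edist_le_eVariationOn {α E : Type*} [LinearOrder α] [PseudoEMetricSpace E]
    (f : α → E) {a b t : α} (ht : t ∈ Set.Icc a b) :
    edist (f a) (f t) + edist (f t) (f b) ≤ eVariationOn f (Set.Icc a b) := by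
  have hsplit : eVariationOn f (Set.Icc a b) =
      eVariationOn f (Set.Icc a t) + eVariationOn f (Set.Icc t b) := by
    rw [← eVariationOn.union f (isGreatest_Icc ht.1) (isLeast_Icc ht.2),
      Set.Icc_union_Icc_eq_Icc ht.1 ht.2]
  rw [hsplit]
  gcongr
  · exact eVariationOn.edist_le f (Set.left_mem_Icc.2 ht.1) (Set.right_mem_Icc.2 ht.1)
  · exact eVariationOn.edist_le f (Set.left_mem_Icc.2 ht.2) (Set.right_mem_Icc.2 ht.2)

theorem length_gt_sin_of_point_outside_sector_general (θ : ℝ)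
    (hθ0 : 0 < θ) (hθ : θ < Real.pi / 2)
    (γ : ℝ → ℂ)
    (p q : ℝ)
    (h0 : γ 0 = (p : ℂ)) (h1 : γ 1 = (q : ℂ) * Complex.exp (θ * Complex.I))
    (hX : ∃ t ∈ Set.Icc (0 : ℝ) 1, 1 < ‖γ t‖) :
    ENNReal.ofReal (Real.sin θ) < eVariationOn γ (Set.Icc 0 1) := by
  obtain ⟨t, ht, hfar⟩ := hX
  have hsin : 0 < Real.sin θ :=
    Real.sin_pos_of_pos_of_lt_pi hθ0 (hθ.trans (by linarith [Real.pi_pos]))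
  have hu : ‖Complex.exp (θ * Complex.I)‖ = 1 := norm_exp_ofReal_mul_I θ
  have hsector := norm_mul_im_le_abs_im_add_abs_im_mul_conj hu (γ t)
  rw [exp_ofReal_mul_I_im] at hsector
  have hdist : Real.sin θ < dist (γ 0) (γ t) + dist (γ t) (γ 1) := by
    rw [h0, h1, dist_comm]
    linarith [lt_mul_of_one_lt_left hsin hfar, abs_im_le_dist_ofReal (γ t) p,
      abs_im_mul_conj_le_dist hu (γ t) q]
  calc ENNReal.ofReal (Real.sin θ)
      < ENNReal.ofReal (dist (γ 0) (γ t) + dist (γ t) (γ 1)) :=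
        (ENNReal.ofReal_lt_ofReal_iff_of_nonneg hsin.le).2 hdist
    _ = edist (γ 0) (γ t) + edist (γ t) (γ 1) := by
        rw [ENNReal.ofReal_add dist_nonneg dist_nonneg, edist_dist, edist_dist]
    _ ≤ eVariationOn γ (Set.Icc 0 1) := edist_add_edist_le_eVariationOn γ ht

/-- Let `0 < θ < π/2` and let `γ : [0,1] → ℂ` be continuous with endpoints on the two
bounding rays of the unit sector of angle `θ`. If some point of `γ` lies strictly outside
the unit disk, then the length of `γ` exceeds `sin θ`. -/
theorem length_gt_sin_of_point_outside_sector (θ : ℝ)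
    (hθ0 : 0 < θ) (hθ : θ < Real.pi / 2)
    (γ : ℝ → ℂ) (hcont : ContinuousOn γ (Set.Icc 0 1))
    (p q : ℝ) (hp : 0 ≤ p) (hq : 0 ≤ q)
    (h0 : γ 0 = (p : ℂ)) (h1 : γ 1 = (q : ℂ) * Complex.exp (θ * Complex.I))
    (hX : ∃ t ∈ Set.Icc (0 : ℝ) 1, 1 < ‖γ t‖) :
    ENNReal.ofReal (Real.sin θ) < eVariationOn γ (Set.Icc 0 1) :=
  length_gt_sin_of_point_outside_sector_general θ hθ0 hθ γ p q h0 h1 hX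
end

section
/- Let 0 < θ < π/2 and let γ : [0,1] → ℂ be a continuous map with γ(0) = p for some real p ≥ 0 and γ(1) = q·e^{iθ} for some real q ≥ 0. If there exists t ∈ [0,1] and a real r > 1 with γ(t) = r·e^{iθ/2} (a point beyond the unit circle on the angle bisector of the sector), then the total variation of γ on [0,1] is strictly greater than 2·sin(θ/2). -/
open Complex

/-! A point `r·e^{iθ/2}` with `r > 1` lies at distance at least `r·sin(θ/2)` from each of the
two lines through `0` at angles `0` and `θ`, hence from each endpoint of the arc. The arc passes
through it, so its length is at least `2r·sin(θ/2) > 2·sin(θ/2)`. -/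

theorem eVariationOn.edist_add_edist_le {α E : Type*} [LinearOrder α] [PseudoEMetricSpace E]
    (f : α → E) {a t b : α} (hat : a ≤ t) (htb : t ≤ b) :
    edist (f a) (f t) + edist (f t) (f b) ≤ eVariationOn f (Set.Icc a b) := by
  have hsplit := eVariationOn.Icc_add_Icc f hat htb (Set.mem_univ t)
  simp only [Set.univ_inter] at hsplit
  rw [← hsplit]
  exact add_le_add
    (eVariationOn.edist_le f (Set.left_mem_Icc.2 hat) (Set.right_mem_Icc.2 hat))
    (eVariationOn.edist_le f (Set.left_mem_Icc.2 htb) (Set.right_mem_Icc.2 htb))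

theorem Complex.abs_im_le_dist_ofReal_s6 (z : ℂ) (x : ℝ) : |z.im| ≤ dist z x := by
  simpa [dist_eq] using Complex.abs_im_le_norm (z - x)

theorem Complex.abs_mul_sin_sub_le_dist (r s φ α : ℝ) :
    |r * Real.sin (φ - α)| ≤ dist ((r : ℂ) * exp (φ * I)) ((s : ℂ) * exp (α * I)) := by
  have rotate : dist ((r : ℂ) * exp (φ * I)) ((s : ℂ) * exp (α * I))
      = dist ((r : ℂ) * exp ((φ - α : ℝ) * I)) (s : ℂ) := by
    rw [dist_eq, dist_eq, ← mul_one ‖(r : ℂ) * exp (φ * I) - s * exp (α * I)‖,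
      ← norm_exp_ofReal_mul_I (-α), ← norm_mul, sub_mul, mul_assoc, mul_assoc, ← exp_add,
      ← exp_add]
    push_cast
    ring_nf
    rw [exp_zero, mul_one]
  rw [rotate]
  simpa only [im_ofReal_mul, exp_ofReal_mul_I_im] using
    abs_im_le_dist_ofReal_s6 ((r : ℂ) * exp ((φ - α : ℝ) * I)) s

theorem length_gt_chord_of_bisector_point_outside_general (θ : ℝ)
    (hθ0 : 0 < θ) (hθ : θ < Real.pi / 2)
    (γ : ℝ → ℂ)
    (p q : ℝ)
    (h0 : γ 0 = (p : ℂ)) (h1 : γ 1 = (q : ℂ) * Complex.exp (θ * Complex.I))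
    (hX : ∃ t ∈ Set.Icc (0 : ℝ) 1, ∃ r : ℝ, 1 < r ∧
      γ t = (r : ℂ) * Complex.exp ((θ / 2 : ℝ) * Complex.I)) :
    ENNReal.ofReal (2 * Real.sin (θ / 2)) < eVariationOn γ (Set.Icc 0 1) := by
  obtain ⟨t, ⟨ht0, ht1⟩, r, hr, hγt⟩ := hX
  have hsin : 0 < Real.sin (θ / 2) :=
    Real.sin_pos_of_pos_of_lt_pi (by linarith) (by linarith [Real.pi_pos])
  have hfirst : r * Real.sin (θ / 2) ≤ dist (γ 0) (γ t) := by
    have h := abs_mul_sin_sub_le_dist r p (θ / 2) 0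
    rw [ofReal_zero, zero_mul, exp_zero, mul_one, sub_zero, dist_comm] at h
    rw [h0, hγt]
    exact (le_abs_self _).trans h
  have hsecond : r * Real.sin (θ / 2) ≤ dist (γ t) (γ 1) := by
    have h := abs_mul_sin_sub_le_dist r q (θ / 2) θ
    rw [show θ / 2 - θ = -(θ / 2) by ring, Real.sin_neg, mul_neg, abs_neg] at h
    rw [hγt, h1]
    exact (le_abs_self _).trans h
  have hchord : 2 * Real.sin (θ / 2) < dist (γ 0) (γ t) + dist (γ t) (γ 1) := by nlinarith
  calc ENNReal.ofReal (2 * Real.sin (θ / 2))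
      < ENNReal.ofReal (dist (γ 0) (γ t) + dist (γ t) (γ 1)) :=
        (ENNReal.ofReal_lt_ofReal_iff (by linarith)).2 hchord
    _ = edist (γ 0) (γ t) + edist (γ t) (γ 1) := by
        rw [ENNReal.ofReal_add dist_nonneg dist_nonneg, edist_dist, edist_dist]
    _ ≤ eVariationOn γ (Set.Icc 0 1) := eVariationOn.edist_add_edist_le γ ht0 ht1

/-- Let `0 < θ < π/2` and let `γ : [0,1] → ℂ` be continuous with endpoints on the two
bounding rays of the unit sector of angle `θ`. If some point of `γ` lies beyond the unit
circle on the angle bisector of the sector, then the length of `γ` exceeds `2·sin(θ/2)`. -/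
theorem length_gt_chord_of_bisector_point_outside (θ : ℝ)
    (hθ0 : 0 < θ) (hθ : θ < Real.pi / 2)
    (γ : ℝ → ℂ) (hcont : ContinuousOn γ (Set.Icc 0 1))
    (p q : ℝ) (hp : 0 ≤ p) (hq : 0 ≤ q)
    (h0 : γ 0 = (p : ℂ)) (h1 : γ 1 = (q : ℂ) * Complex.exp (θ * Complex.I))
    (hX : ∃ t ∈ Set.Icc (0 : ℝ) 1, ∃ r : ℝ, 1 < r ∧
      γ t = (r : ℂ) * Complex.exp ((θ / 2 : ℝ) * Complex.I)) :
    ENNReal.ofReal (2 * Real.sin (θ / 2)) < eVariationOn γ (Set.Icc 0 1) :=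
  length_gt_chord_of_bisector_point_outside_general θ hθ0 hθ γ p q h0 h1 hX
end

section
/- Let 0 < θ < π and let γ : [0,1] → ℂ be a continuous map with γ(0) = p for some real p ≥ 0 and γ(1) = q·e^{iθ} for some real q ≥ 0. Suppose there exist s, t ∈ [0,1] with |γ(s)| > 1 and |γ(t)| > 1 such that γ(s) and γ(t) lie strictly on opposite sides of the angle bisector of the sector, i.e., Im(e^{−iθ/2}·γ(s)) < 0 < Im(e^{−iθ/2}·γ(t)) or Im(e^{−iθ/2}·γ(t)) < 0 < Im(e^{−iθ/2}·γ(s)). Then the total variation of γ on [0,1] is strictly greater than 2·sin(θ/2). -/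
/-! Between the two far points the path crosses the bisector, say at time `r`. On `[0, r]` it
runs from the line of `R₁` through a point `z` with `|z| > 1` to the bisector; as these lines
meet at angle `θ/2`, the distances from `z` to them add up to at least `sin (θ/2) · |z|`, which
exceeds `sin (θ/2)`. The same holds on `[r, 1]` for the bisector and the line of `R₂`, so the
length exceeds `2 sin (θ/2)`. -/

open Complex ComplexConjugate

theorem abs_im_mul_norm_le (u z : ℂ) : |u.im| * ‖z‖ ≤ |(u * z).im| + ‖u‖ * |z.im| := by
  rcases eq_or_ne z 0 with rfl | hz
  · simp
  -- `conj z * (u * z) = ‖z‖² u`, and the imaginary part of the left side is a 2×2 determinant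
  have hdet : ‖z‖ ^ 2 * u.im = z.re * (u * z).im - z.im * (u * z).re := by
    rw [Complex.sq_norm, normSq_apply]; simp only [mul_im, mul_re]; ring
  refine le_of_mul_le_mul_left ?_ (norm_pos_iff.2 hz)
  calc ‖z‖ * (|u.im| * ‖z‖) = |z.re * (u * z).im - z.im * (u * z).re| := by
        rw [← hdet, abs_mul, abs_of_nonneg (sq_nonneg ‖z‖)]; ring
    _ ≤ |z.re| * |(u * z).im| + |z.im| * |(u * z).re| := by
        rw [← abs_mul, ← abs_mul]; exact abs_sub _ _
    _ ≤ ‖z‖ * |(u * z).im| + |z.im| * (‖u‖ * ‖z‖) := by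
        rw [← norm_mul]; gcongr
        · exact abs_re_le_norm z
        · exact abs_re_le_norm _
    _ = ‖z‖ * (|(u * z).im| + ‖u‖ * |z.im|) := by ring

theorem abs_im_mul_le_mul_norm_sub {c w : ℂ} (hw : (c * w).im = 0) (z : ℂ) :
    |(c * z).im| ≤ ‖c‖ * ‖z - w‖ :=
  calc |(c * z).im| = |(c * (z - w)).im| := by rw [mul_sub, sub_im, hw, sub_zero]
    _ ≤ ‖c * (z - w)‖ := abs_im_le_norm _
    _ = ‖c‖ * ‖z - w‖ := norm_mul _ _

-- `{w | (c * w).im = 0}` with `‖c‖ = 1` is the line through `0` in direction `conj c`, and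
-- `|(c₂ * conj c₁).im|` is the sine of the angle between two such lines.
theorem abs_im_mul_conj_mul_norm_le_dist_add_dist {c₁ c₂ w₁ w₂ : ℂ} (hc₁ : ‖c₁‖ = 1)
    (hc₂ : ‖c₂‖ = 1) (hw₁ : (c₁ * w₁).im = 0) (hw₂ : (c₂ * w₂).im = 0) (z : ℂ) :
    |(c₂ * conj c₁).im| * ‖z‖ ≤ dist z w₁ + dist z w₂ := by
  have hrot : c₂ * conj c₁ * (c₁ * z) = c₂ * z := by
    rw [mul_assoc, ← mul_assoc (conj c₁), conj_mul', hc₁]; simp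
  have h := abs_im_mul_norm_le (c₂ * conj c₁) (c₁ * z)
  rw [hrot, norm_mul, norm_mul, RCLike.norm_conj, hc₁, hc₂, one_mul, one_mul, one_mul] at h
  have h₁ := abs_im_mul_le_mul_norm_sub hw₁ z
  have h₂ := abs_im_mul_le_mul_norm_sub hw₂ z
  rw [hc₁, one_mul] at h₁
  rw [hc₂, one_mul] at h₂
  rw [dist_eq_norm, dist_eq_norm]
  linarith

theorem eVariationOn.edist_add_edist_le_s7 {α E : Type*} [LinearOrder α] [PseudoEMetricSpace E]
    (f : α → E) {s : Set α} {x y z : α} (hxy : x ≤ y) (hyz : y ≤ z) (hx : x ∈ s) (hy : y ∈ s)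
    (hz : z ∈ s) : edist (f x) (f y) + edist (f y) (f z) ≤ eVariationOn f s :=
  calc edist (f x) (f y) + edist (f y) (f z)
      ≤ eVariationOn f (s ∩ Set.Icc x y) + eVariationOn f (s ∩ Set.Icc y z) :=
        add_le_add (eVariationOn.edist_le f ⟨hx, le_rfl, hxy⟩ ⟨hy, hxy, le_rfl⟩)
          (eVariationOn.edist_le f ⟨hy, le_rfl, hyz⟩ ⟨hz, hyz, le_rfl⟩)
    _ = eVariationOn f (s ∩ Set.Icc x z) := eVariationOn.Icc_add_Icc f hxy hyz hy
    _ ≤ eVariationOn f s := eVariationOn.mono f Set.inter_subset_left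

theorem ofReal_abs_im_mul_conj_mul_norm_le_eVariationOn {α : Type*} [LinearOrder α]
    {γ : α → ℂ} {s : Set α} {x m y : α} (hxm : x ≤ m) (hmy : m ≤ y) (hx : x ∈ s) (hm : m ∈ s)
    (hy : y ∈ s) {c₁ c₂ : ℂ} (hc₁ : ‖c₁‖ = 1) (hc₂ : ‖c₂‖ = 1) (hγx : (c₁ * γ x).im = 0)
    (hγy : (c₂ * γ y).im = 0) :
    ENNReal.ofReal (|(c₂ * conj c₁).im| * ‖γ m‖) ≤ eVariationOn γ s :=
  calc ENNReal.ofReal (|(c₂ * conj c₁).im| * ‖γ m‖)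
      ≤ ENNReal.ofReal (dist (γ m) (γ x) + dist (γ m) (γ y)) :=
        ENNReal.ofReal_le_ofReal
          (abs_im_mul_conj_mul_norm_le_dist_add_dist hc₁ hc₂ hγx hγy (γ m))
    _ = edist (γ x) (γ m) + edist (γ m) (γ y) := by
        rw [ENNReal.ofReal_add dist_nonneg dist_nonneg, ← edist_dist, ← edist_dist, edist_comm]
    _ ≤ eVariationOn γ s := eVariationOn.edist_add_edist_le_s7 γ hxm hmy hx hm hy

theorem abs_im_exp_neg_mul_I (x : ℝ) : |(exp (-x * I)).im| = |Real.sin x| := by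
  rw [← ofReal_neg, exp_ofReal_mul_I_im, Real.sin_neg, abs_neg]

theorem length_gt_chord_of_two_points_opposite_sides_general (θ : ℝ)
    (hθ0 : 0 < θ) (hθ : θ < Real.pi)
    (γ : ℝ → ℂ) (hcont : ContinuousOn γ (Set.Icc 0 1))
    (p q : ℝ)
    (h0 : γ 0 = (p : ℂ)) (h1 : γ 1 = (q : ℂ) * Complex.exp (θ * Complex.I))
    (hXY : ∃ s ∈ Set.Icc (0 : ℝ) 1, ∃ t ∈ Set.Icc (0 : ℝ) 1,
      1 < ‖γ s‖ ∧ 1 < ‖γ t‖ ∧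
      ((Complex.exp (-(θ / 2 : ℝ) * Complex.I) * γ s).im < 0 ∧
        0 < (Complex.exp (-(θ / 2 : ℝ) * Complex.I) * γ t).im ∨
       (Complex.exp (-(θ / 2 : ℝ) * Complex.I) * γ t).im < 0 ∧
        0 < (Complex.exp (-(θ / 2 : ℝ) * Complex.I) * γ s).im)) :
    ENNReal.ofReal (2 * Real.sin (θ / 2)) < eVariationOn γ (Set.Icc 0 1) := by
  obtain ⟨s, hs, t, ht, hγs, hγt, hsides⟩ := hXY
  set c := exp (-(θ / 2 : ℝ) * I)
  wlog hst : s ≤ t generalizing s t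
  · exact this t ht s hs hγt hγs hsides.symm (le_of_not_ge hst)
  obtain ⟨r, ⟨hsr, hrt⟩, hr⟩ : ∃ r ∈ Set.Icc s t, (c * γ r).im = 0 := by
    have hcont' : ContinuousOn (fun x ↦ (c * γ x).im) (Set.uIcc s t) :=
      (continuous_im.comp_continuousOn (continuousOn_const.mul hcont)).mono
        (Set.uIcc_subset_Icc hs ht)
    rw [← Set.uIcc_of_le hst]
    exact intermediate_value_uIcc hcont' (Set.mem_uIcc.2 (hsides.imp
      (fun h ↦ ⟨h.1.le, h.2.le⟩) (fun h ↦ ⟨h.1.le, h.2.le⟩)))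
  have hsin : 0 < Real.sin (θ / 2) := Real.sin_pos_of_pos_of_lt_pi (by linarith) (by linarith)
  have hnorm (x : ℝ) : ‖exp (-x * I)‖ = 1 := by rw [← ofReal_neg]; exact norm_exp_ofReal_mul_I _
  have hγ0 : (1 * γ 0).im = 0 := by simp [h0]
  have hγ1 : (exp (-θ * I) * γ 1).im = 0 := by
    rw [h1, mul_left_comm, ← exp_add]; simp
  have hvar₁ : ENNReal.ofReal (Real.sin (θ / 2) * ‖γ s‖) ≤ eVariationOn γ (Set.Icc 0 r) := by
    have := ofReal_abs_im_mul_conj_mul_norm_le_eVariationOn (s := Set.Icc 0 r) hs.1 hsr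
      ⟨le_rfl, hs.1.trans hsr⟩ ⟨hs.1, hsr⟩ ⟨hs.1.trans hsr, le_rfl⟩ norm_one (hnorm _) hγ0 hr
    rwa [map_one, mul_one, abs_im_exp_neg_mul_I, abs_of_pos hsin] at this
  have hvar₂ : ENNReal.ofReal (Real.sin (θ / 2) * ‖γ t‖) ≤ eVariationOn γ (Set.Icc r 1) := by
    have hc : exp (-θ * I) * conj c = c := by
      rw [← exp_conj, ← exp_add]; congr 1
      rw [map_mul, map_neg, conj_ofReal, conj_I]; push_cast; ring
    have := ofReal_abs_im_mul_conj_mul_norm_le_eVariationOn (s := Set.Icc r 1) hrt ht.2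
      ⟨le_rfl, hrt.trans ht.2⟩ ⟨hrt, ht.2⟩ ⟨hrt.trans ht.2, le_rfl⟩ (hnorm _) (hnorm _) hr hγ1
    rwa [hc, abs_im_exp_neg_mul_I, abs_of_pos hsin] at this
  calc ENNReal.ofReal (2 * Real.sin (θ / 2))
      < ENNReal.ofReal (Real.sin (θ / 2) * ‖γ s‖) + ENNReal.ofReal (Real.sin (θ / 2) * ‖γ t‖) := by
        rw [← ENNReal.ofReal_add (by positivity) (by positivity)]
        exact (ENNReal.ofReal_lt_ofReal_iff (by positivity)).2 (by nlinarith)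
    _ ≤ eVariationOn γ (Set.Icc 0 r) + eVariationOn γ (Set.Icc r 1) := add_le_add hvar₁ hvar₂
    _ ≤ eVariationOn γ (Set.Icc 0 1) := by
        rw [← Set.Icc_union_Icc_eq_Icc (hs.1.trans hsr) (hrt.trans ht.2)]
        exact eVariationOn.add_le_union γ fun x hx y hy ↦ hx.2.trans hy.1

/-- Let `0 < θ < π` and let `γ : [0,1] → ℂ` be continuous with endpoints on the two
bounding rays of the unit sector of angle `θ`. If `γ` has two points strictly outside the
unit disk lying strictly on opposite sides of the angle bisector of the sector, then the
length of `γ` exceeds `2·sin(θ/2)`. -/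
theorem length_gt_chord_of_two_points_opposite_sides (θ : ℝ)
    (hθ0 : 0 < θ) (hθ : θ < Real.pi)
    (γ : ℝ → ℂ) (hcont : ContinuousOn γ (Set.Icc 0 1))
    (p q : ℝ) (hp : 0 ≤ p) (hq : 0 ≤ q)
    (h0 : γ 0 = (p : ℂ)) (h1 : γ 1 = (q : ℂ) * Complex.exp (θ * Complex.I))
    (hXY : ∃ s ∈ Set.Icc (0 : ℝ) 1, ∃ t ∈ Set.Icc (0 : ℝ) 1,
      1 < ‖γ s‖ ∧ 1 < ‖γ t‖ ∧
      ((Complex.exp (-(θ / 2 : ℝ) * Complex.I) * γ s).im < 0 ∧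
        0 < (Complex.exp (-(θ / 2 : ℝ) * Complex.I) * γ t).im ∨
       (Complex.exp (-(θ / 2 : ℝ) * Complex.I) * γ t).im < 0 ∧
        0 < (Complex.exp (-(θ / 2 : ℝ) * Complex.I) * γ s).im)) :
    ENNReal.ofReal (2 * Real.sin (θ / 2)) < eVariationOn γ (Set.Icc 0 1) :=
  length_gt_chord_of_two_points_opposite_sides_general θ hθ0 hθ γ hcont p q h0 h1 hXY
end

section
/- Let γ : [0,1] → ℂ be an injective continuous map that is piecewise affine with respect to some partition of [0,1], and let 0 < θ < π. Then there exist a point c ∈ ℂ and unit vectors u₁, u₂ ∈ ℂ whose angle (in [0,π]) equals π − θ, such that Re(conj(u₁)·(γ(t) − c)) ≥ 0 and Re(conj(u₂)·(γ(t) − c)) ≥ 0 for all t ∈ [0,1] (so γ lies in the closed wedge of angle θ with vertex c), and moreover either c ∈ γ([0,1]) (γ touches the wedge's vertex) or there exist t₁ < t₂ < t₃ in [0,1] such that Re(conj(u₁)·(γ(t₂) − c)) = 0 and Re(conj(u₂)·(γ(t₁) − c)) = Re(conj(u₂)·(γ(t₃) − c)) = 0, or Re(conj(u₂)·(γ(t₂)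 − c)) = 0 and Re(conj(u₁)·(γ(t₁) − c)) = Re(conj(u₁)·(γ(t₃) − c)) = 0 (γ touches the two bounding rays at three parametrically alternating points). -/
/-!
For a direction `φ`, let `S φ ⊆ [0,1]` be the set of parameters at which `γ` touches its supporting
line with inward normal `e^{iφ}`, and put `α = π - θ`. The supporting lines with normals `e^{iφ}`
and `e^{i(φ+α)}` bound a wedge of angle `θ` containing `γ`, and it has the required contacts unless
`S φ` and `S (φ + α)` are disjoint and do not interlace, i.e. one lies entirely before the other.
Both orderings are open conditions on `φ`, since `S` is upper hemicontinuous with compact values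
(Berge's maximum theorem); by connectedness of `ℝ` one of them would then hold for every `φ`.
But every `S φ` contains a break point of `γ`, so following `φ, φ + α, φ + 2α, …` would produce an
infinite strictly monotone sequence of break points.
-/

open Set

/-- `γ` is piecewise affine with respect to some partition `0 = t₀ < t₁ < ⋯ < tₙ = 1`. -/
def IsPiecewiseAffineOnUnitInterval (γ : ℝ → ℂ) : Prop :=
  ∃ (n : ℕ) (T : Fin (n + 1) → ℝ), StrictMono T ∧ T 0 = 0 ∧ T (Fin.last n) = 1 ∧
    ∀ i : Fin n, ∃ a b : ℂ, ∀ s ∈ Set.Icc (T i.castSucc) (T i.succ), γ s = a + s • b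

lemma IsMinOn.csInf_image_eq {α β : Type*} [ConditionallyCompleteLattice β] {f : α → β}
    {s : Set α} {a : α} (h : IsMinOn f s a) (ha : a ∈ s) : sInf (f '' s) = f a :=
  IsLeast.csInf_eq ⟨mem_image_of_mem f ha, by rintro _ ⟨z, hz, rfl⟩; exact h hz⟩

def argminOn {Y : Type*} (f : Y → ℝ) (K : Set Y) : Set Y := {y ∈ K | IsMinOn f K y}

lemma argminOn_subset {Y : Type*} {f : Y → ℝ} {K : Set Y} : argminOn f K ⊆ K := fun _ hy => hy.1

section ArgminOn

variable {X Y : Type*} [TopologicalSpace X] [TopologicalSpace Y] {f : Y → ℝ} {K : Set Y}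

lemma IsCompact.nonempty_argminOn (hK : IsCompact K) (hne : K.Nonempty) (hf : ContinuousOn f K) :
    (argminOn f K).Nonempty :=
  hK.exists_isMinOn hne hf

lemma IsCompact.isCompact_argminOn [T2Space Y] (hK : IsCompact K) (hf : ContinuousOn f K) :
    IsCompact (argminOn f K) := by
  have heq : argminOn f K = K ∩ ⋂ z ∈ K, K ∩ f ⁻¹' Iic (f z) := by
    ext y
    simp only [argminOn, isMinOn_iff, mem_inter_iff, mem_iInter, mem_preimage, mem_Iic,
      mem_ofPred_eq]
    exact ⟨fun ⟨hy, h⟩ => ⟨hy, fun z hz => ⟨hy, h z hz⟩⟩,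
      fun ⟨hy, h⟩ => ⟨hy, fun z hz => (h z hz).2⟩⟩
  refine hK.of_isClosed_subset ?_ argminOn_subset
  rw [heq]
  exact hK.isClosed.inter <| isClosed_biInter fun z _ =>
    hf.preimage_isClosed_of_isClosed hK.isClosed isClosed_Iic

lemma IsCompact.argminOn_subset_iff (hK : IsCompact K) (hf : ContinuousOn f K) {U : Set Y}
    (hKU : IsCompact (K \ U)) (hKU' : (K \ U).Nonempty) :
    argminOn f K ⊆ U ↔ sInf (f '' K) < sInf (f '' (K \ U)) := by
  obtain ⟨c, hc, hcmin⟩ := hKU.exists_isMinOn hKU' (hf.mono sdiff_subset)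
  rw [hcmin.csInf_image_eq hc]
  constructor
  · intro hU
    have hc_not_min : ¬ IsMinOn f K c := fun h => hc.2 (hU ⟨hc.1, h⟩)
    obtain ⟨z, hz, hzc⟩ : ∃ z ∈ K, f z < f c := by
      simpa [isMinOn_iff] using hc_not_min
    exact (csInf_le (hK.bddBelow_image hf) (mem_image_of_mem f hz)).trans_lt hzc
  · intro hlt y ⟨hy, hymin⟩
    by_contra hyU
    rw [hymin.csInf_image_eq hy] at hlt
    exact (hlt.trans_le (hcmin ⟨hy, hyU⟩)).false

lemma IsCompact.continuous_sInf_image_of_continuousOn {f : X → Y → ℝ} (hK : IsCompact K)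
    (hf : ContinuousOn ↿f (univ ×ˢ K)) : Continuous fun x => sInf (f x '' K) := by
  have : CompactSpace K := isCompact_iff_compactSpace.mp hK
  have hcont : Continuous fun p : X × K => f p.1 p.2 :=
    hf.comp_continuous (continuous_fst.prodMk (continuous_subtype_val.comp continuous_snd))
      fun p => ⟨mem_univ _, p.2.2⟩
  simpa only [image_univ, ← image_eq_range] using
    isCompact_univ.continuous_sInf (f := fun x (y : K) => f x y) hcont

theorem IsCompact.upperHemicontinuous_argminOn {f : X → Y → ℝ} (hK : IsCompact K)
    (hf : ContinuousOn ↿f (univ ×ˢ K)) : UpperHemicontinuous fun x => argminOn (f x) K := by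
  have hfx : ∀ x, ContinuousOn (f x) K := fun x =>
    hf.comp (continuousOn_const.prodMk continuousOn_id) fun y hy => ⟨mem_univ _, hy⟩
  rw [upperHemicontinuous_iff_isOpen_preimage_Iic]
  intro U hU
  have hKU : IsCompact (K \ U) := hK.diff hU
  rcases (K \ U).eq_empty_or_nonempty with hempty | hne
  · convert isOpen_univ
    exact eq_univ_of_forall fun x => argminOn_subset.trans (sdiff_eq_empty.mp hempty)
  · convert isOpen_lt (hK.continuous_sInf_image_of_continuousOn hf)
      (hKU.continuous_sInf_image_of_continuousOn (hf.mono (prod_mono subset_rfl sdiff_subset)))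
    ext x
    exact hK.argminOn_subset_iff (hfx x) hKU hne

end ArgminOn

lemma UpperHemicontinuous.comp_continuous {X X' Y : Type*} [TopologicalSpace X]
    [TopologicalSpace X'] [TopologicalSpace Y] {S : X → Set Y} {g : X' → X}
    (hS : UpperHemicontinuous S) (hg : Continuous g) : UpperHemicontinuous (S ∘ g) := by
  rw [upperHemicontinuous_iff_isOpen_preimage_Iic] at hS ⊢
  exact fun U hU => (hS U hU).preimage hg

def Alternates {β : Type*} [LT β] (A B : Set β) : Prop :=
  ∃ t₁ t₂ t₃, t₁ < t₂ ∧ t₂ < t₃ ∧ t₁ ∈ A ∧ t₂ ∈ B ∧ t₃ ∈ A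

section Order

variable {β : Type*} [LinearOrder β]

lemma forall_lt_or_forall_lt_of_not_alternates {A B : Set β} (hAB : Disjoint A B)
    (hABA : ¬ Alternates A B) (hBAB : ¬ Alternates B A) :
    (∀ a ∈ A, ∀ b ∈ B, a < b) ∨ (∀ b ∈ B, ∀ a ∈ A, b < a) := by
  by_contra! h
  obtain ⟨⟨a, ha, b, hb, hba⟩, ⟨b', hb', a', ha', ha'b'⟩⟩ := h
  have hba : b < a := hba.lt_of_ne fun h => hAB.ne_of_mem ha hb h.symm
  have ha'b' : a' < b' := ha'b'.lt_of_ne fun h => hAB.ne_of_mem ha' hb' h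
  rcases le_or_gt a a' with haa' | _
  · exact hBAB ⟨b, a, b', hba, haa'.trans_lt ha'b', hb, ha, hb'⟩
  rcases lt_or_ge a' b with ha'b | hba'
  · exact hABA ⟨a', b, a, ha'b, hba, ha', hb, ha⟩
  · exact hBAB ⟨b, a', b', (hba'.lt_of_ne fun h => hAB.ne_of_mem ha' hb h.symm), ha'b', hb, ha',
      hb'⟩

lemma IsCompact.exists_between_of_forall_lt [DenselyOrdered β] [TopologicalSpace β]
    [OrderClosedTopology β] {A B : Set β} (hA : IsCompact A) (hA' : A.Nonempty) (hB : IsCompact B)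
    (hB' : B.Nonempty) (h : ∀ a ∈ A, ∀ b ∈ B, a < b) : ∃ c, A ⊆ Iio c ∧ B ⊆ Ioi c := by
  obtain ⟨M, hMA, hM⟩ := hA.exists_isGreatest hA'
  obtain ⟨m, hmB, hm⟩ := hB.exists_isLeast hB'
  obtain ⟨c, hMc, hcm⟩ := exists_between (h M hMA m hmB)
  exact ⟨c, fun a ha => (hM ha).trans_lt hMc, fun b hb => hcm.trans_le (hm hb)⟩

lemma UpperHemicontinuous.isOpen_setOf_forall_lt {X : Type*} [TopologicalSpace X]
    [DenselyOrdered β] [TopologicalSpace β] [OrderClosedTopology β] {S₁ S₂ : X → Set β}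
    (h₁ : UpperHemicontinuous S₁) (h₂ : UpperHemicontinuous S₂)
    (hc₁ : ∀ x, IsCompact (S₁ x)) (hn₁ : ∀ x, (S₁ x).Nonempty)
    (hc₂ : ∀ x, IsCompact (S₂ x)) (hn₂ : ∀ x, (S₂ x).Nonempty) :
    IsOpen {x | ∀ a ∈ S₁ x, ∀ b ∈ S₂ x, a < b} := by
  rw [upperHemicontinuous_iff_isOpen_preimage_Iic] at h₁ h₂
  have heq : {x | ∀ a ∈ S₁ x, ∀ b ∈ S₂ x, a < b} =
      ⋃ c, S₁ ⁻¹' Iic (Iio c) ∩ S₂ ⁻¹' Iic (Ioi c) := by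
    ext x
    simp only [mem_ofPred_eq, mem_iUnion, mem_inter_iff, mem_preimage, mem_Iic]
    refine ⟨(hc₁ x).exists_between_of_forall_lt (hn₁ x) (hc₂ x) (hn₂ x), ?_⟩
    rintro ⟨c, hc₁, hc₂⟩ a ha b hb
    exact (hc₁ ha).trans (hc₂ hb)
  rw [heq]
  exact isOpen_iUnion fun c => (h₁ _ isOpen_Iio).inter (h₂ _ isOpen_Ioi)

lemma not_forall_lt_of_finite {S : ℝ → Set β} {F : Set β} (hF : F.Finite)
    (hSF : ∀ φ, (S φ ∩ F).Nonempty) (α : ℝ) : ¬ ∀ φ, ∀ a ∈ S φ, ∀ b ∈ S (φ + α), a < b := by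
  intro h
  choose s hs using hSF
  have hmono : StrictMono fun k : ℕ => s (k * α) := by
    refine strictMono_nat_of_lt_succ fun k => h _ _ (hs _).1 _ ?_
    rw [Nat.cast_succ, add_one_mul]
    exact (hs _).1
  exact hF.not_infinite (infinite_of_injective_forall_mem hmono.injective fun k => (hs _).2)

theorem exists_meets_or_alternates [DenselyOrdered β] [TopologicalSpace β] [OrderClosedTopology β]
    {S : ℝ → Set β} (hS : UpperHemicontinuous S) (hSc : ∀ φ, IsCompact (S φ)) {F : Set β}
    (hF : F.Finite) (hSF : ∀ φ, (S φ ∩ F).Nonempty) (α : ℝ) :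
    ∃ φ, (S φ ∩ S (φ + α)).Nonempty ∨ Alternates (S φ) (S (φ + α)) ∨
      Alternates (S (φ + α)) (S φ) := by
  by_contra! h
  have hSn : ∀ φ, (S φ).Nonempty := fun φ => (hSF φ).mono inter_subset_left
  have hSα := hS.comp_continuous (continuous_add_const α)
  set P := {φ | ∀ a ∈ S φ, ∀ b ∈ S (φ + α), a < b}
  set N := {φ | ∀ b ∈ S (φ + α), ∀ a ∈ S φ, b < a}
  have hP : IsOpen P := hS.isOpen_setOf_forall_lt hSα hSc hSn (fun _ => hSc _) (fun _ => hSn _)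
  have hN : IsOpen N := hSα.isOpen_setOf_forall_lt hS (fun _ => hSc _) (fun _ => hSn _) hSc hSn
  have hPN : Disjoint P N := by
    refine disjoint_left.mpr fun φ hφP hφN => ?_
    obtain ⟨a, ha⟩ := hSn φ
    obtain ⟨b, hb⟩ := hSn (φ + α)
    exact (hφP a ha b hb).asymm (hφN b hb a ha)
  have hcover : univ ⊆ P ∪ N := fun φ _ =>
    forall_lt_or_forall_lt_of_not_alternates (disjoint_iff_inter_eq_empty.mpr (h φ).1)
      (h φ).2.1 (h φ).2.2
  rcases isPreconnected_univ.subset_or_subset hP hN hPN hcover with hPu | hNu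
  · exact not_forall_lt_of_finite hF hSF α fun φ => hPu (mem_univ φ)
  · refine not_forall_lt_of_finite hF hSF (-α) fun φ a ha b hb => ?_
    have hφ : φ + -α ∈ N := hNu (mem_univ _)
    exact hφ a (by rwa [neg_add_cancel_right]) b hb

end Order

lemma Fin.exists_mem_Icc_castSucc_succ {β : Type*} [LinearOrder β] {m : ℕ} (T : Fin (m + 2) → β)
    {t : β} (ht : t ∈ Icc (T 0) (T (Fin.last (m + 1)))) :
    ∃ i : Fin (m + 1), t ∈ Icc (T i.castSucc) (T i.succ) := by
  by_contra! h
  have hstep : ∀ i : Fin (m + 1), T i.castSucc ≤ t → T i.succ < t := fun i hi =>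
    not_le.mp fun h' => h i ⟨hi, h'⟩
  have hbelow : ∀ i : Fin (m + 1), T i.succ < t := fun i => by
    induction i using Fin.induction with
    | zero => exact hstep 0 ht.1
    | succ i ih => exact hstep i.succ (by rw [← Fin.succ_castSucc]; exact ih.le)
  exact (hbelow (Fin.last m)).not_ge (by rw [Fin.succ_last]; exact ht.2)

lemma IsMinOn.isMinOn_left_or_right_of_affine {f : ℝ → ℝ} {K : Set ℝ} {a b t p q : ℝ}
    (ht : IsMinOn f K t) (htab : t ∈ Icc a b)
    (hf : ∀ s ∈ Icc a b, f s = p + s * q) : IsMinOn f K a ∨ IsMinOn f K b := by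
  have ha : a ∈ Icc a b := ⟨le_rfl, htab.1.trans htab.2⟩
  have hb : b ∈ Icc a b := ⟨htab.1.trans htab.2, le_rfl⟩
  rcases le_total 0 q with hq | hq
  · refine Or.inl fun z hz => (?_ : f a ≤ f t).trans (ht hz)
    rw [hf a ha, hf t htab]
    nlinarith [htab.1]
  · refine Or.inr fun z hz => (?_ : f b ≤ f t).trans (ht hz)
    rw [hf b hb, hf t htab]
    nlinarith [htab.2]

lemma argminOn_inter_range_nonempty_of_affine {f : ℝ → ℝ} {m : ℕ} {T : Fin (m + 2) → ℝ}
    (hT : Monotone T)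
    (hf : ∀ i : Fin (m + 1), ∃ p q : ℝ, ∀ s ∈ Icc (T i.castSucc) (T i.succ), f s = p + s * q)
    (hne : (argminOn f (Icc (T 0) (T (Fin.last _)))).Nonempty) :
    (argminOn f (Icc (T 0) (T (Fin.last _))) ∩ range T).Nonempty := by
  obtain ⟨t, htK, htmin⟩ := hne
  obtain ⟨i, hi⟩ := Fin.exists_mem_Icc_castSucc_succ T htK
  obtain ⟨p, q, hpq⟩ := hf i
  have hmem : ∀ j, T j ∈ Icc (T 0) (T (Fin.last _)) := fun j =>
    ⟨hT (Fin.zero_le j), hT (Fin.le_last j)⟩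
  rcases htmin.isMinOn_left_or_right_of_affine hi hpq with h | h
  · exact ⟨_, ⟨hmem _, h⟩, mem_range_self _⟩
  · exact ⟨_, ⟨hmem _, h⟩, mem_range_self _⟩

open Complex ComplexConjugate

lemma conj_exp_mul_I_mul_exp_mul_I (φ ψ : ℝ) :
    conj (exp (φ * I)) * exp (ψ * I) = exp (↑(ψ - φ) * I) := by
  rw [← exp_conj, ← exp_add]
  congr 1
  simp only [map_mul, conj_ofReal, conj_I, ofReal_sub]
  ring

lemma angle_exp_mul_I_exp_mul_I {φ α : ℝ} (h0 : 0 ≤ α) (hπ : α ≤ Real.pi) :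
    InnerProductGeometry.angle (exp (φ * I)) (exp (↑(φ + α) * I)) = α := by
  rw [InnerProductGeometry.angle, Complex.inner, mul_comm, conj_exp_mul_I_mul_exp_mul_I,
    add_sub_cancel_left, exp_ofReal_mul_I_re, norm_exp_ofReal_mul_I, norm_exp_ofReal_mul_I,
    mul_one, div_one, Real.arccos_cos h0 hπ]

-- Cramer's rule for the system `⟪u₁, c⟫ = h₁`, `⟪u₂, c⟫ = h₂`, of determinant `Im (conj u₁ * u₂)`.
lemma exists_re_conj_mul_eq {u₁ u₂ : ℂ} (h : (conj u₁ * u₂).im ≠ 0) (h₁ h₂ : ℝ) :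
    ∃ c : ℂ, (conj u₁ * c).re = h₁ ∧ (conj u₂ * c).re = h₂ := by
  set D := (conj u₁ * u₂).im
  have hD : D = u₁.re * u₂.im - u₁.im * u₂.re := by simp [D]; ring
  refine ⟨⟨(h₁ * u₂.im - u₁.im * h₂) / D, (u₁.re * h₂ - u₂.re * h₁) / D⟩, ?_, ?_⟩ <;>
  · simp only [mul_re, conj_re, conj_im]
    field_simp
    rw [hD]
    ring

lemma eq_zero_of_re_conj_mul_eq_zero {u₁ u₂ w : ℂ} (h : (conj u₁ * u₂).im ≠ 0)
    (h₁ : (conj u₁ * w).re = 0) (h₂ : (conj u₂ * w).re = 0) : w = 0 := by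
  have hD : (conj u₁ * u₂).im = u₁.re * u₂.im - u₁.im * u₂.re := by simp; ring
  simp only [mul_re, conj_re, conj_im] at h₁ h₂
  rw [hD] at h
  apply Complex.ext <;> apply (mul_left_cancel₀ h) <;> simp only [zero_re, zero_im, mul_zero]
  · linear_combination u₂.im * h₁ - u₁.im * h₂
  · linear_combination u₁.re * h₂ - u₂.re * h₁

def supportParams (γ : ℝ → ℂ) (u : ℂ) : Set ℝ := argminOn (fun t => (conj u * γ t).re) (Icc 0 1)

section Curve

variable {γ : ℝ → ℂ}

lemma isCompact_supportParams (hγ : ContinuousOn γ (Icc 0 1)) (u : ℂ) :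
    IsCompact (supportParams γ u) :=
  isCompact_Icc.isCompact_argminOn (by fun_prop)

lemma nonempty_supportParams (hγ : ContinuousOn γ (Icc 0 1)) (u : ℂ) :
    (supportParams γ u).Nonempty :=
  isCompact_Icc.nonempty_argminOn (nonempty_Icc.2 zero_le_one) (by fun_prop)

lemma upperHemicontinuous_supportParams (hγ : ContinuousOn γ (Icc 0 1)) :
    UpperHemicontinuous fun φ : ℝ => supportParams γ (exp (φ * I)) :=
  isCompact_Icc.upperHemicontinuous_argminOn
    (f := fun (φ : ℝ) t => (conj (exp (φ * I)) * γ t).re) <| by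
    have hγ' : ContinuousOn (fun p : ℝ × ℝ => γ p.2) (univ ×ˢ Icc 0 1) :=
      hγ.comp continuousOn_snd fun p hp => hp.2
    exact continuous_re.comp_continuousOn ((by fun_prop : Continuous fun p : ℝ × ℝ =>
      conj (exp (p.1 * I))).continuousOn.mul hγ')

lemma IsPiecewiseAffineOnUnitInterval.exists_finite_forall_supportParams_inter_nonempty
    (hγ : ContinuousOn γ (Icc 0 1)) (h : IsPiecewiseAffineOnUnitInterval γ) :
    ∃ F : Set ℝ, F.Finite ∧ ∀ u, (supportParams γ u ∩ F).Nonempty := by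
  obtain ⟨_ | m, T, hT, hT0, hT1, hseg⟩ := h
  · exact absurd (hT0.symm.trans hT1) zero_ne_one
  refine ⟨range T, finite_range T, fun u => ?_⟩
  have haff : ∀ i : Fin (m + 1), ∃ p q : ℝ,
      ∀ s ∈ Icc (T i.castSucc) (T i.succ), (conj u * γ s).re = p + s * q := fun i => by
    obtain ⟨a, b, hab⟩ := hseg i
    refine ⟨(conj u * a).re, (conj u * b).re, fun s hs => ?_⟩
    rw [hab s hs, real_smul, mul_add, add_re, mul_left_comm, re_ofReal_mul]
  have hIcc : Icc (T 0) (T (Fin.last _)) = Icc 0 1 := by rw [hT0, hT1]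
  simpa only [supportParams, hIcc] using argminOn_inter_range_nonempty_of_affine hT.monotone haff
    (by simpa only [supportParams, hIcc] using nonempty_supportParams hγ u)

lemma re_conj_mul_sub_of_mem_supportParams {u c : ℂ} {t₀ : ℝ} (ht₀ : t₀ ∈ supportParams γ u)
    (hc : (conj u * c).re = (conj u * γ t₀).re) :
    (∀ t ∈ Icc (0 : ℝ) 1, 0 ≤ (conj u * (γ t - c)).re) ∧
      ∀ t ∈ supportParams γ u, (conj u * (γ t - c)).re = 0 := by
  simp only [mul_sub, sub_re, hc, sub_nonneg, sub_eq_zero]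
  exact ⟨fun t ht => ht₀.2 ht, fun t ht => le_antisymm (ht.2 ht₀.1) (ht₀.2 ht.1)⟩

lemma exists_vertex_supportParams (hγ : ContinuousOn γ (Icc 0 1)) {u₁ u₂ : ℂ}
    (h : (conj u₁ * u₂).im ≠ 0) :
    ∃ c : ℂ, (∀ t ∈ Icc (0 : ℝ) 1, 0 ≤ (conj u₁ * (γ t - c)).re ∧ 0 ≤ (conj u₂ * (γ t - c)).re) ∧
      (∀ t ∈ supportParams γ u₁, (conj u₁ * (γ t - c)).re = 0) ∧
      ∀ t ∈ supportParams γ u₂, (conj u₂ * (γ t - c)).re = 0 := by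
  obtain ⟨t₁, ht₁⟩ := nonempty_supportParams hγ u₁
  obtain ⟨t₂, ht₂⟩ := nonempty_supportParams hγ u₂
  obtain ⟨c, hc₁, hc₂⟩ := exists_re_conj_mul_eq h (conj u₁ * γ t₁).re (conj u₂ * γ t₂).re
  obtain ⟨hnonneg₁, hzero₁⟩ := re_conj_mul_sub_of_mem_supportParams ht₁ hc₁
  obtain ⟨hnonneg₂, hzero₂⟩ := re_conj_mul_sub_of_mem_supportParams ht₂ hc₂
  exact ⟨c, fun t ht => ⟨hnonneg₁ t ht, hnonneg₂ t ht⟩, hzero₁, hzero₂⟩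

end Curve

theorem lambda_property_general (γ : ℝ → ℂ)
    (hcont : ContinuousOn γ (Set.Icc 0 1))
    (hpoly : IsPiecewiseAffineOnUnitInterval γ)
    (θ : ℝ) (hθ0 : 0 < θ) (hθ : θ < Real.pi) :
    ∃ (c u₁ u₂ : ℂ), ‖u₁‖ = 1 ∧ ‖u₂‖ = 1 ∧
      InnerProductGeometry.angle u₁ u₂ = Real.pi - θ ∧
      (∀ t ∈ Set.Icc (0 : ℝ) 1,
        0 ≤ ((starRingEnd ℂ) u₁ * (γ t - c)).re ∧
        0 ≤ ((starRingEnd ℂ) u₂ * (γ t - c)).re) ∧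
      (c ∈ γ '' Set.Icc (0 : ℝ) 1 ∨
        ∃ t₁ t₂ t₃, t₁ ∈ Set.Icc (0 : ℝ) 1 ∧ t₂ ∈ Set.Icc (0 : ℝ) 1 ∧
          t₃ ∈ Set.Icc (0 : ℝ) 1 ∧ t₁ < t₂ ∧ t₂ < t₃ ∧
          ((((starRingEnd ℂ) u₁ * (γ t₂ - c)).re = 0 ∧
            ((starRingEnd ℂ) u₂ * (γ t₁ - c)).re = 0 ∧
            ((starRingEnd ℂ) u₂ * (γ t₃ - c)).re = 0) ∨
           (((starRingEnd ℂ) u₂ * (γ t₂ - c)).re = 0 ∧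
            ((starRingEnd ℂ) u₁ * (γ t₁ - c)).re = 0 ∧
            ((starRingEnd ℂ) u₁ * (γ t₃ - c)).re = 0))) := by
  obtain ⟨F, hF, hSF⟩ := hpoly.exists_finite_forall_supportParams_inter_nonempty hcont
  have hα : 0 < Real.pi - θ ∧ Real.pi - θ < Real.pi := ⟨by linarith, by linarith⟩
  obtain ⟨φ, hφ⟩ := exists_meets_or_alternates (upperHemicontinuous_supportParams hcont)
    (fun _ => isCompact_supportParams hcont _) hF (fun _ => hSF _) (Real.pi - θ)
  have hind : (conj (exp (φ * I)) * exp (↑(φ + (Real.pi - θ)) * I)).im ≠ 0 := by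
    rw [conj_exp_mul_I_mul_exp_mul_I, exp_ofReal_mul_I_im, add_sub_cancel_left]
    exact (Real.sin_pos_of_pos_of_lt_pi hα.1 hα.2).ne'
  obtain ⟨c, hwedge, hside₁, hside₂⟩ := exists_vertex_supportParams hcont hind
  refine ⟨c, _, _, norm_exp_ofReal_mul_I _, norm_exp_ofReal_mul_I _,
    angle_exp_mul_I_exp_mul_I hα.1.le hα.2.le, hwedge, ?_⟩
  rcases hφ with ⟨t, ht₁, ht₂⟩ | ⟨t₁, t₂, t₃, h₁₂, h₂₃, ht₁, ht₂, ht₃⟩ |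
    ⟨t₁, t₂, t₃, h₁₂, h₂₃, ht₁, ht₂, ht₃⟩
  · exact Or.inl ⟨t, argminOn_subset ht₁,
      sub_eq_zero.mp (eq_zero_of_re_conj_mul_eq_zero hind (hside₁ t ht₁) (hside₂ t ht₂))⟩
  · exact Or.inr ⟨t₁, t₂, t₃, argminOn_subset ht₁, argminOn_subset ht₂, argminOn_subset ht₃,
      h₁₂, h₂₃, Or.inr ⟨hside₂ _ ht₂, hside₁ _ ht₁, hside₁ _ ht₃⟩⟩
  · exact Or.inr ⟨t₁, t₂, t₃, argminOn_subset ht₁, argminOn_subset ht₂, argminOn_subset ht₃,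
      h₁₂, h₂₃, Or.inl ⟨hside₁ _ ht₂, hside₂ _ ht₁, hside₂ _ ht₃⟩⟩

/-- **Lambda property.** Every simple polygonal arc can be placed in a closed wedge of
angle `θ` (given by a vertex `c` and inward unit normals `u₁`, `u₂` making angle `π − θ`)
so that either the arc touches the wedge's vertex, or it touches the two bounding rays at
three parametrically alternating points. -/
theorem lambda_property (γ : ℝ → ℂ)
    (hcont : ContinuousOn γ (Set.Icc 0 1))
    (hinj : Set.InjOn γ (Set.Icc 0 1))
    (hpoly : IsPiecewiseAffineOnUnitInterval γ)
    (θ : ℝ) (hθ0 : 0 < θ) (hθ : θ < Real.pi) :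
    ∃ (c u₁ u₂ : ℂ), ‖u₁‖ = 1 ∧ ‖u₂‖ = 1 ∧
      InnerProductGeometry.angle u₁ u₂ = Real.pi - θ ∧
      (∀ t ∈ Set.Icc (0 : ℝ) 1,
        0 ≤ ((starRingEnd ℂ) u₁ * (γ t - c)).re ∧
        0 ≤ ((starRingEnd ℂ) u₂ * (γ t - c)).re) ∧
      (c ∈ γ '' Set.Icc (0 : ℝ) 1 ∨
        ∃ t₁ t₂ t₃, t₁ ∈ Set.Icc (0 : ℝ) 1 ∧ t₂ ∈ Set.Icc (0 : ℝ) 1 ∧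
          t₃ ∈ Set.Icc (0 : ℝ) 1 ∧ t₁ < t₂ ∧ t₂ < t₃ ∧
          ((((starRingEnd ℂ) u₁ * (γ t₂ - c)).re = 0 ∧
            ((starRingEnd ℂ) u₂ * (γ t₁ - c)).re = 0 ∧
            ((starRingEnd ℂ) u₂ * (γ t₃ - c)).re = 0) ∨
           (((starRingEnd ℂ) u₂ * (γ t₂ - c)).re = 0 ∧
            ((starRingEnd ℂ) u₁ * (γ t₁ - c)).re = 0 ∧
            ((starRingEnd ℂ) u₁ * (γ t₃ - c)).re = 0))) :=
  lambda_property_general γ hcont hpoly θ hθ0 hθ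
end

section
/- Let γ : [0,1] → ℂ be an injective continuous map that is piecewise affine with respect to some partition of [0,1]. Then there exist a unit vector u ∈ ℂ and real numbers a ≤ b with a ≤ Re(conj(u)·γ(t)) ≤ b for all t ∈ [0,1], together with parameters t₁ < t₂ < t₃ in [0,1] such that either Re(conj(u)·γ(t₁)) = Re(conj(u)·γ(t₃)) = a and Re(conj(u)·γ(t₂)) = b, or Re(conj(u)·γ(t₁)) = Re(conj(u)·γ(t₃)) = b and Re(conj(u)·γ(t₂)) = a. (That is, γ admits a pair of parallel support lines which it touches at three parametrically alternating points.) -/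
/-!
Project the curve onto the direction `u ∈ 𝕊¹`: `F u t = Re (conj u * γ t)`. If some `F u` is
constant on `[0, 1]`, any three parameters alternate. Otherwise no parameter is both a minimizer
and a maximizer of `F u`, so if no direction showed alternating extrema, in each direction either
all minimizers would precede all maximizers or all would follow them. Extremizers move upper
semicontinuously under uniformly small perturbations, so both conditions are open in `u`, and
`u ↦ -u` exchanges them; the two would disconnect the circle.
-/

open Set

open Filter Topology

section Extrema

variable {α β : Type*}

theorem isMinOn_neg_iff [AddCommGroup β] [PartialOrder β] [IsOrderedAddMonoid β]
    {f : α → β} {s : Set α} {a : α} : IsMinOn (-f) s a ↔ IsMaxOn f s a :=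
  ⟨fun h => by simpa using h.neg, IsMaxOn.neg⟩

theorem isMaxOn_neg_iff [AddCommGroup β] [PartialOrder β] [IsOrderedAddMonoid β]
    {f : α → β} {s : Set α} {a : α} : IsMaxOn (-f) s a ↔ IsMinOn f s a :=
  ⟨fun h => by simpa using h.neg, IsMinOn.neg⟩

theorem IsCompact.isCompact_setOf_isMinOn [TopologicalSpace α] [T2Space α] {f : α → ℝ}
    {K : Set α} (hK : IsCompact K) (hf : ContinuousOn f K) :
    IsCompact {s ∈ K | IsMinOn f K s} := by
  rcases K.eq_empty_or_nonempty with rfl | hKne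
  · simp
  obtain ⟨s₀, hs₀, hmin₀⟩ := hK.exists_isMinOn hKne hf
  have hset : {s ∈ K | IsMinOn f K s} = K ∩ f ⁻¹' Iic (f s₀) := by
    ext s
    exact and_congr_right fun _ =>
      ⟨fun h => h hs₀, fun h => isMinOn_iff.2 fun t ht => h.trans (hmin₀ ht)⟩
  rw [hset]
  exact hK.of_isClosed_subset (hf.preimage_isClosed_of_isClosed hK.isClosed isClosed_Iic)
    inter_subset_left

end Extrema

section UniformPerturbation

variable {ι α : Type*} [TopologicalSpace α] {l : Filter ι} {F : ι → α → ℝ} {f : α → ℝ}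
  {K : Set α}

theorem ContinuousOn.tendstoUniformlyOn_of_isCompact {X β : Type*} [TopologicalSpace X]
    [UniformSpace β] {F : X → α → β} (hK : IsCompact K) (hF : ContinuousOn ↿F (univ ×ˢ K))
    (x : X) : TendstoUniformlyOn F (F x) (𝓝 x) K := by
  intro u hu
  obtain ⟨v, hv, hvu⟩ := hK.mem_uniformity_of_prod hF (mem_univ x) (symm_le_uniformity hu)
  rw [nhdsWithin_univ] at hv
  exact mem_of_superset hv hvu

theorem TendstoUniformlyOn.eventually_isMinOn_imp_mem (hF : TendstoUniformlyOn F f l K)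
    (hK : IsCompact K) (hf : ContinuousOn f K) {U : Set α} (hU : IsOpen U)
    (hfU : ∀ s ∈ K, IsMinOn f K s → s ∈ U) :
    ∀ᶠ i in l, ∀ s ∈ K, IsMinOn (F i) K s → s ∈ U := by
  rcases K.eq_empty_or_nonempty with rfl | hKne
  · simp
  obtain ⟨s₀, hs₀, hmin₀⟩ := hK.exists_isMinOn hKne hf
  have hgap : ∀ s ∈ K \ U, f s₀ < f s := fun s hs =>
    (hmin₀ hs.1).lt_of_ne fun h => hs.2 <| hfU s hs.1 fun t ht => h ▸ hmin₀ ht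
  obtain ⟨v, hv, hvf⟩ := (hK.diff hU).exists_forall_le' (hf.mono sdiff_subset) hgap
  filter_upwards [Metric.tendstoUniformlyOn_iff.1 hF ((v - f s₀) / 2) (by linarith)]
    with i hi s hs hmin
  by_contra hsU
  have hclose := hi s hs
  have hclose₀ := hi s₀ hs₀
  rw [Real.dist_eq, abs_lt] at hclose hclose₀
  linarith [isMinOn_iff.1 hmin s₀ hs₀, hvf s ⟨hs, hsU⟩, hclose.1, hclose₀.2]

theorem TendstoUniformlyOn.eventually_isMaxOn_imp_mem (hF : TendstoUniformlyOn F f l K)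
    (hK : IsCompact K) (hf : ContinuousOn f K) {U : Set α} (hU : IsOpen U)
    (hfU : ∀ s ∈ K, IsMaxOn f K s → s ∈ U) :
    ∀ᶠ i in l, ∀ s ∈ K, IsMaxOn (F i) K s → s ∈ U := by
  have hF' : TendstoUniformlyOn (fun i => -F i) (-f) l K :=
    uniformContinuous_neg.comp_tendstoUniformlyOn hF
  simpa only [← isMinOn_neg_iff] using
    hF'.eventually_isMinOn_imp_mem hK hf.neg hU (by simpa only [isMinOn_neg_iff] using hfU)

end UniformPerturbation

def MinimizersPrecedeMaximizers (g : ℝ → ℝ) (K : Set ℝ) : Prop :=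
  ∀ s ∈ K, ∀ t ∈ K, IsMinOn g K s → IsMaxOn g K t → s < t

def HasAlternatingExtrema (g : ℝ → ℝ) (K : Set ℝ) : Prop :=
  ∃ t₁ ∈ K, ∃ t₂ ∈ K, ∃ t₃ ∈ K, t₁ < t₂ ∧ t₂ < t₃ ∧
    (IsMinOn g K t₁ ∧ IsMaxOn g K t₂ ∧ IsMinOn g K t₃ ∨
      IsMaxOn g K t₁ ∧ IsMinOn g K t₂ ∧ IsMaxOn g K t₃)

namespace MinimizersPrecedeMaximizers

variable {g : ℝ → ℝ} {K : Set ℝ}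

theorem exists_separating (hK : IsCompact K) (hg : ContinuousOn g K)
    (h : MinimizersPrecedeMaximizers g K) :
    ∃ c, (∀ s ∈ K, IsMinOn g K s → s < c) ∧ (∀ t ∈ K, IsMaxOn g K t → c < t) := by
  rcases K.eq_empty_or_nonempty with rfl | hKne
  · simp
  obtain ⟨p, ⟨hpK, hp⟩, hp_ge⟩ := (hK.isCompact_setOf_isMinOn hg).exists_isGreatest
    (hK.exists_isMinOn hKne hg)
  obtain ⟨q, ⟨hqK, hq⟩, hq_le⟩ := (hK.isCompact_setOf_isMinOn hg.neg).exists_isLeast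
    (hK.exists_isMinOn hKne hg.neg)
  have hpq := h p hpK q hqK hp (isMinOn_neg_iff.1 hq)
  refine ⟨(p + q) / 2, fun s hs hsmin => ?_, fun t ht htmax => ?_⟩
  · linarith [hp_ge ⟨hs, hsmin⟩]
  · linarith [hq_le ⟨ht, isMinOn_neg_iff.2 htmax⟩]

theorem not_neg (hK : IsCompact K) (hKne : K.Nonempty) (hg : ContinuousOn g K)
    (h : MinimizersPrecedeMaximizers g K) : ¬MinimizersPrecedeMaximizers (-g) K := by
  intro h'
  obtain ⟨s, hs, hmin⟩ := hK.exists_isMinOn hKne hg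
  obtain ⟨t, ht, hmax⟩ := hK.exists_isMaxOn hKne hg
  exact (h s hs t ht hmin hmax).not_gt (h' t ht s hs hmax.neg (isMaxOn_neg_iff.2 hmin))

theorem _root_.TendstoUniformlyOn.eventually_minimizersPrecedeMaximizers {ι : Type*}
    {l : Filter ι} {F : ι → ℝ → ℝ} (hF : TendstoUniformlyOn F g l K) (hK : IsCompact K)
    (hg : ContinuousOn g K) (h : MinimizersPrecedeMaximizers g K) :
    ∀ᶠ i in l, MinimizersPrecedeMaximizers (F i) K := by
  obtain ⟨c, hmin, hmax⟩ := h.exists_separating hK hg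
  filter_upwards [hF.eventually_isMinOn_imp_mem hK hg isOpen_Iio hmin,
    hF.eventually_isMaxOn_imp_mem hK hg isOpen_Ioi hmax] with i hi hi' s hs t ht hsmin htmax
  exact (hi s hs hsmin).trans (hi' t ht htmax)

end MinimizersPrecedeMaximizers

namespace HasAlternatingExtrema

variable {g : ℝ → ℝ} {K : Set ℝ}

theorem of_isMinOn_of_isMaxOn (h3 : ∃ t₁ ∈ K, ∃ t₂ ∈ K, ∃ t₃ ∈ K, t₁ < t₂ ∧ t₂ < t₃) {p : ℝ}
    (hmin : IsMinOn g K p) (hmax : IsMaxOn g K p) : HasAlternatingExtrema g K := by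
  have hconst : ∀ t ∈ K, IsMinOn g K t := fun t ht =>
    isMinOn_iff.2 fun x hx => (isMaxOn_iff.1 hmax t ht).trans (isMinOn_iff.1 hmin x hx)
  obtain ⟨t₁, h₁, t₂, h₂, t₃, h₃, h₁₂, h₂₃⟩ := h3
  refine ⟨t₁, h₁, t₂, h₂, t₃, h₃, h₁₂, h₂₃, Or.inl ⟨hconst t₁ h₁, ?_, hconst t₃ h₃⟩⟩
  exact isMaxOn_iff.2 fun x hx => (isMaxOn_iff.1 hmax x hx).trans (isMinOn_iff.1 hmin t₂ h₂)

end HasAlternatingExtrema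

-- If both orders occur, one minimizer and one maximizer from each pair alternate.
theorem minimizersPrecedeMaximizers_or_of_not_hasAlternatingExtrema {g : ℝ → ℝ} {K : Set ℝ}
    (h3 : ∃ t₁ ∈ K, ∃ t₂ ∈ K, ∃ t₃ ∈ K, t₁ < t₂ ∧ t₂ < t₃) (h : ¬HasAlternatingExtrema g K) :
    MinimizersPrecedeMaximizers g K ∨ MinimizersPrecedeMaximizers (-g) K := by
  have hne : ∀ {s t}, IsMinOn g K s → IsMaxOn g K t → s ≠ t := fun hs ht hst =>
    h (.of_isMinOn_of_isMaxOn h3 hs (hst ▸ ht))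
  by_contra! hcon
  obtain ⟨hg, hng⟩ := hcon
  unfold MinimizersPrecedeMaximizers at hg hng
  push Not at hg hng
  obtain ⟨s, hs, t, ht, hsmin, htmax, hts⟩ := hg
  obtain ⟨t', ht', s', hs', ht'max, hs'min, hst'⟩ := hng
  rw [isMinOn_neg_iff] at ht'max
  rw [isMaxOn_neg_iff] at hs'min
  replace hts := hts.lt_of_ne (hne hsmin htmax).symm
  replace hst' := hst'.lt_of_ne (hne hs'min ht'max)
  apply h
  rcases lt_or_ge s' t with hs't | hts'
  · exact ⟨s', hs', t, ht, s, hs, hs't, hts, Or.inl ⟨hs'min, htmax, hsmin⟩⟩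
  · exact ⟨t, ht, s', hs', t', ht', hts'.lt_of_ne (hne hs'min htmax).symm, hst',
      Or.inr ⟨htmax, hs'min, ht'max⟩⟩

theorem exists_hasAlternatingExtrema {X : Type*} [TopologicalSpace X] [PreconnectedSpace X]
    [Nonempty X] {F : X → ℝ → ℝ} {K : Set ℝ} (hK : IsCompact K)
    (h3 : ∃ t₁ ∈ K, ∃ t₂ ∈ K, ∃ t₃ ∈ K, t₁ < t₂ ∧ t₂ < t₃)
    (hF : ContinuousOn ↿F (univ ×ˢ K)) (hneg : ∀ x, ∃ y, F y = -F x) :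
    ∃ x, HasAlternatingExtrema (F x) K := by
  by_contra! h
  have hopen : ∀ G : X → ℝ → ℝ, ContinuousOn ↿G (univ ×ˢ K) →
      IsOpen {x | MinimizersPrecedeMaximizers (G x) K} := fun G hG =>
    isOpen_iff_mem_nhds.2 fun x hx =>
      (hG.tendstoUniformlyOn_of_isCompact hK x).eventually_minimizersPrecedeMaximizers hK
        (hG.uncurry_left x (mem_univ x)) hx
  obtain ⟨x₀⟩ := ‹Nonempty X›
  obtain ⟨y₀, hy₀⟩ := hneg x₀
  have hsplit : ∀ x y, MinimizersPrecedeMaximizers (F x) K →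
      MinimizersPrecedeMaximizers (-F y) K → False := fun x y hx hy => by
    obtain ⟨z, -, hz, hz'⟩ := isPreconnected_univ _ _ (hopen F hF) (hopen (fun x => -F x) hF.neg)
      (fun x _ => minimizersPrecedeMaximizers_or_of_not_hasAlternatingExtrema h3 (h x))
      ⟨x, trivial, hx⟩ ⟨y, trivial, hy⟩
    obtain ⟨t, ht, -⟩ := h3
    exact hz.not_neg hK ⟨t, ht⟩ (hF.uncurry_left z (mem_univ z)) hz'
  rcases minimizersPrecedeMaximizers_or_of_not_hasAlternatingExtrema h3 (h x₀) with hx₀ | hx₀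
  · exact hsplit x₀ y₀ hx₀ (by rwa [hy₀, neg_neg])
  · exact hsplit y₀ x₀ (by rwa [hy₀]) hx₀

theorem HasAlternatingExtrema.exists_supportLevels {g : ℝ → ℝ} {K : Set ℝ}
    (h : HasAlternatingExtrema g K) :
    ∃ a b : ℝ, a ≤ b ∧ (∀ t ∈ K, a ≤ g t ∧ g t ≤ b) ∧
      ∃ t₁ t₂ t₃, t₁ ∈ K ∧ t₂ ∈ K ∧ t₃ ∈ K ∧ t₁ < t₂ ∧ t₂ < t₃ ∧
        ((g t₁ = a ∧ g t₃ = a ∧ g t₂ = b) ∨ (g t₁ = b ∧ g t₃ = b ∧ g t₂ = a)) := by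
  obtain ⟨t₁, h₁, t₂, h₂, t₃, h₃, h₁₂, h₂₃, ⟨hmin₁, hmax₂, hmin₃⟩ | ⟨hmax₁, hmin₂, hmax₃⟩⟩ := h
  · refine ⟨g t₁, g t₂, hmin₁ h₂, fun t ht => ⟨hmin₁ ht, hmax₂ ht⟩,
      t₁, t₂, t₃, h₁, h₂, h₃, h₁₂, h₂₃, Or.inl ⟨rfl, ?_, rfl⟩⟩
    exact le_antisymm (hmin₃ h₁) (hmin₁ h₃)
  · refine ⟨g t₂, g t₁, hmin₂ h₁, fun t ht => ⟨hmin₂ ht, hmax₁ ht⟩,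
      t₁, t₂, t₃, h₁, h₂, h₃, h₁₂, h₂₃, Or.inr ⟨rfl, ?_, rfl⟩⟩
    exact le_antisymm (hmax₁ h₃) (hmax₃ h₁)

theorem parallel_lambda_property_general (γ : ℝ → ℂ)
    (hcont : ContinuousOn γ (Set.Icc 0 1)) :
    ∃ (u : ℂ) (a b : ℝ), ‖u‖ = 1 ∧ a ≤ b ∧
      (∀ t ∈ Set.Icc (0 : ℝ) 1,
        a ≤ ((starRingEnd ℂ) u * γ t).re ∧ ((starRingEnd ℂ) u * γ t).re ≤ b) ∧
      ∃ t₁ t₂ t₃, t₁ ∈ Set.Icc (0 : ℝ) 1 ∧ t₂ ∈ Set.Icc (0 : ℝ) 1 ∧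
        t₃ ∈ Set.Icc (0 : ℝ) 1 ∧ t₁ < t₂ ∧ t₂ < t₃ ∧
        ((((starRingEnd ℂ) u * γ t₁).re = a ∧ ((starRingEnd ℂ) u * γ t₃).re = a ∧
          ((starRingEnd ℂ) u * γ t₂).re = b) ∨
         (((starRingEnd ℂ) u * γ t₁).re = b ∧ ((starRingEnd ℂ) u * γ t₃).re = b ∧
          ((starRingEnd ℂ) u * γ t₂).re = a)) := by
  let F : Circle → ℝ → ℝ := fun u t => ((starRingEnd ℂ) u * γ t).re
  have hF : ContinuousOn ↿F (univ ×ˢ Icc 0 1) :=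
    Complex.continuous_re.comp_continuousOn <|
      (Complex.continuous_conj.comp (continuous_subtype_val.comp continuous_fst)).continuousOn.mul
        (hcont.comp continuousOn_snd fun p hp => hp.2)
  obtain ⟨u, hu⟩ := exists_hasAlternatingExtrema isCompact_Icc
    ⟨0, by norm_num, 1 / 2, by norm_num, 1, by norm_num, by norm_num, by norm_num⟩ hF
    fun u => ⟨-u, funext fun t => by
      simp only [F, Circle.coe_neg, map_neg, neg_mul, Complex.neg_re, Pi.neg_apply]⟩
  obtain ⟨a, b, hab, hbounds, hlevels⟩ := hu.exists_supportLevels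
  exact ⟨u, a, b, Circle.norm_coe u, hab, hbounds, hlevels⟩

/-- **Parallel lambda property.** Every simple polygonal arc admits a pair of parallel
support lines (in direction given by a unit normal `u`, at levels `a ≤ b`) which it
touches at three parametrically alternating points. -/
theorem parallel_lambda_property (γ : ℝ → ℂ)
    (hcont : ContinuousOn γ (Set.Icc 0 1))
    (hinj : Set.InjOn γ (Set.Icc 0 1))
    (hpoly : IsPiecewiseAffineOnUnitInterval γ) :
    ∃ (u : ℂ) (a b : ℝ), ‖u‖ = 1 ∧ a ≤ b ∧
      (∀ t ∈ Set.Icc (0 : ℝ) 1,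
        a ≤ ((starRingEnd ℂ) u * γ t).re ∧ ((starRingEnd ℂ) u * γ t).re ≤ b) ∧
      ∃ t₁ t₂ t₃, t₁ ∈ Set.Icc (0 : ℝ) 1 ∧ t₂ ∈ Set.Icc (0 : ℝ) 1 ∧
        t₃ ∈ Set.Icc (0 : ℝ) 1 ∧ t₁ < t₂ ∧ t₂ < t₃ ∧
        ((((starRingEnd ℂ) u * γ t₁).re = a ∧ ((starRingEnd ℂ) u * γ t₃).re = a ∧
          ((starRingEnd ℂ) u * γ t₂).re = b) ∨
         (((starRingEnd ℂ) u * γ t₁).re = b ∧ ((starRingEnd ℂ) u * γ t₃).re = b ∧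
          ((starRingEnd ℂ) u * γ t₂).re = a)) :=
  parallel_lambda_property_general γ hcont
end
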